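/- If M_1 → M_0 → M → 0 is an exact sequence of R-modules, then Γ(M_0) → Γ(M) is surjective and its kernel is the ideal of Γ(M_0) generated by the image of the augmentation ideal Γ⁺(M_1) of Γ(M_1). -/

import Mathlib

/-!
Let `I` be the ideal generated by `F(Γ⁺(M₁))`. Since `g ∘ f = 0` and `γₙ(0) = 0` for `n > 0`,
`G` kills `I`. Conversely, the `γₙ(f m₁)` with `n > 0` vanish modulo `I`, so by the addition
formula `γₙ(a) mod I` depends only on `g a`. Composing with a set-theoretic section of `g`
gives a family on `M` satisfying the defining relations of `Γ(M)`, hence an algebra map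
`Γ(M) → Γ(M₀)/I` which, composed with `G`, is the quotient map; so `ker G ⊆ I`.
-/

open TensorProduct

universe u

/-- The relations defining the free divided power algebra on `M`: the generator
`X (m, n)` stands for `γ_n(m)`. -/
inductive DPRel (R : Type u) [CommRing R] (M : Type u) [AddCommGroup M] [Module R M] :
    MvPolynomial (M × ℕ) R → Prop
  | zero (m : M) : DPRel R M (MvPolynomial.X (m, 0) - 1)
  | smul (r : R) (m : M) (n : ℕ) :
      DPRel R M (MvPolynomial.X (r • m, n) - MvPolynomial.C (r ^ n) * MvPolynomial.X (m, n))
  | add (m m' : M) (n : ℕ) :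
      DPRel R M (MvPolynomial.X (m + m', n) -
        ∑ ij ∈ Finset.HasAntidiagonal.antidiagonal n, MvPolynomial.X (m, ij.1) * MvPolynomial.X (m', ij.2))
  | mul (m : M) (i j : ℕ) :
      DPRel R M (MvPolynomial.X (m, i) * MvPolynomial.X (m, j) -
        ((i + j).choose i : MvPolynomial (M × ℕ) R) * MvPolynomial.X (m, i + j))

/-- The free divided power algebra `Γ(M)` on the `R`-module `M`. -/
def DPA (R : Type u) [CommRing R] (M : Type u) [AddCommGroup M] [Module R M] : Type u :=
  MvPolynomial (M × ℕ) R ⧸ Ideal.span {p | DPRel R M p}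

variable (R : Type u) [CommRing R] (M : Type u) [AddCommGroup M] [Module R M]

noncomputable instance : CommRing (DPA R M) := Ideal.Quotient.commRing _
noncomputable instance : Algebra R (DPA R M) := Ideal.Quotient.algebra R

/-- The divided power `γ_n(m) ∈ Γ(M)`. -/
noncomputable def dpGamma (n : ℕ) (m : M) : DPA R M :=
  Ideal.Quotient.mk (Ideal.span {p | DPRel R M p}) (MvPolynomial.X (m, n))

/-- The degree `n` piece `Γⁿ(M)` of `Γ(M)`: the span of products `∏ γ_{n_i}(m_i)`
with `∑ n_i = n`. -/
noncomputable def GammaPow (n : ℕ) : Submodule R (DPA R M) :=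
  Submodule.span R {x | ∃ (k : ℕ) (ms : Fin k → M) (ns : Fin k → ℕ),
    (∑ i, ns i) = n ∧ x = ∏ i, dpGamma R M (ns i) (ms i)}

lemma dpGamma_mem (n : ℕ) (m : M) : dpGamma R M n m ∈ GammaPow R M n :=
  Submodule.subset_span ⟨1, fun _ => m, fun _ => n, by simp, by simp⟩

open Finset.HasAntidiagonal

section DPFamily

variable {A : Type*} [CommSemiring A] [Algebra R A] {N : Type*} [AddCommGroup N] [Module R N]

structure IsDPFamily (γ : ℕ → N → A) : Prop where
  zero : ∀ m, γ 0 m = 1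
  smul : ∀ (r : R) m n, γ n (r • m) = algebraMap R A (r ^ n) * γ n m
  add : ∀ m m' n, γ n (m + m') = ∑ ij ∈ antidiagonal n, γ ij.1 m * γ ij.2 m'
  mul : ∀ m i j, γ i m * γ j m = ((i + j).choose i : A) * γ (i + j) m

variable {R}

namespace IsDPFamily

variable {γ : ℕ → N → A}

lemma apply_zero (hγ : IsDPFamily R γ) {n : ℕ} (hn : n ≠ 0) : γ n 0 = 0 := by
  simpa [zero_pow hn] using hγ.smul (0 : R) 0 n

lemma map {B : Type*} [CommSemiring B] [Algebra R B] (hγ : IsDPFamily R γ) (φ : A →ₐ[R] B) :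
    IsDPFamily R (fun n m => φ (γ n m)) where
  zero m := by simp [hγ.zero]
  smul r m n := by simp [hγ.smul]
  add m m' n := by simp [hγ.add]
  mul m i j := by rw [← map_mul, hγ.mul, map_mul, map_natCast]

lemma apply_add_of_forall_eq_zero (hγ : IsDPFamily R γ) {y : N} (hy : ∀ n ≠ 0, γ n y = 0)
    (n : ℕ) (x : N) : γ n (x + y) = γ n x := by
  rw [hγ.add, Finset.sum_eq_single (n, 0)]
  · simp [hγ.zero]
  · rintro ⟨i, j⟩ hij hne
    have hj : j ≠ 0 := by
      rintro rfl
      simp_all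
    simp [hy j hj]
  · simp

lemma comp_rightInverse {N₀ : Type*} [AddCommGroup N₀] [Module R N₀] {γ : ℕ → N₀ → A}
    (hγ : IsDPFamily R γ) (g : N₀ →ₗ[R] N) {s : N → N₀} (hs : Function.RightInverse s g)
    (hfib : ∀ n a b, g a = g b → γ n a = γ n b) : IsDPFamily R (fun n m => γ n (s m)) where
  zero m := hγ.zero _
  smul r m n := by
    rw [hfib n _ (r • s m) (by simp [hs _]), hγ.smul]
  add m m' n := by
    rw [hfib n _ (s m + s m') (by simp [hs _]), hγ.add]
  mul m i j := hγ.mul _ _ _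

end IsDPFamily

end DPFamily

section

variable {R}

lemma isDPFamily_dpGamma (N : Type u) [AddCommGroup N] [Module R N] :
    IsDPFamily R (dpGamma R N) := by
  have rel {p} (hp : DPRel R N p) : Ideal.Quotient.mk (Ideal.span {q | DPRel R N q}) p = 0 :=
    Ideal.Quotient.eq_zero_iff_mem.mpr (Ideal.subset_span hp)
  constructor
  · intro m
    have h := rel (DPRel.zero m)
    rwa [map_sub, map_one, sub_eq_zero] at h
  · intro r m n
    have h := rel (DPRel.smul r m n)
    rwa [map_sub, map_mul, sub_eq_zero] at h
  · intro m m' n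
    have h := rel (DPRel.add m m' n)
    simp only [map_sub, map_sum, map_mul, sub_eq_zero] at h
    exact h
  · intro m i j
    have h := rel (DPRel.mul m i j)
    rwa [map_sub, map_mul, map_mul, map_natCast, sub_eq_zero] at h

end

namespace DPA

variable {R M}

noncomputable def mk : MvPolynomial (M × ℕ) R →ₐ[R] DPA R M :=
  Ideal.Quotient.mkₐ R _

noncomputable def lift {A : Type*} [CommRing A] [Algebra R A] {γ : ℕ → M → A}
    (hγ : IsDPFamily R γ) : DPA R M →ₐ[R] A :=
  Ideal.Quotient.liftₐ _ (MvPolynomial.aeval fun v => γ v.2 v.1) fun _ hp => by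
    refine (Ideal.span_le.mpr fun p hrel => ?_ : _ ≤ RingHom.ker _) hp
    rcases hrel with ⟨m⟩ | ⟨r, m, n⟩ | ⟨m, m', n⟩ | ⟨m, i, j⟩ <;>
      simp [hγ.zero, hγ.smul, hγ.add, hγ.mul]

@[simp]
lemma lift_dpGamma {A : Type*} [CommRing A] [Algebra R A] {γ : ℕ → M → A}
    (hγ : IsDPFamily R γ) (n : ℕ) (m : M) : lift hγ (dpGamma R M n m) = γ n m :=
  MvPolynomial.aeval_X _ _

lemma algHom_ext {A : Type*} [Semiring A] [Algebra R A] {φ ψ : DPA R M →ₐ[R] A}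
    (h : ∀ n m, φ (dpGamma R M n m) = ψ (dpGamma R M n m)) : φ = ψ :=
  Ideal.Quotient.algHom_ext R (MvPolynomial.algHom_ext fun v => h v.2 v.1)

lemma adjoin_range_dpGamma :
    Algebra.adjoin R (Set.range fun v : M × ℕ => dpGamma R M v.2 v.1) = ⊤ := by
  rw [show (Set.range fun v : M × ℕ => dpGamma R M v.2 v.1) =
      mk '' Set.range MvPolynomial.X from Set.range_comp _ _,
    Algebra.adjoin_image, MvPolynomial.adjoin_range_X, Algebra.map_top,
    AlgHom.range_eq_top]
  exact Ideal.Quotient.mkₐ_surjective R _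

lemma surjective_of_dpGamma_mem_range {B : Type*} [Semiring B] [Algebra R B]
    (G : B →ₐ[R] DPA R M) (h : ∀ n m, dpGamma R M n m ∈ G.range) : Function.Surjective G := by
  rw [← AlgHom.range_eq_top, eq_top_iff, ← adjoin_range_dpGamma]
  exact Algebra.adjoin_le (by rintro _ ⟨⟨m, n⟩, rfl⟩; exact h n m)

lemma iSup_gammaPow_le_ker {A : Type*} [CommSemiring A] [Algebra R A] (φ : DPA R M →ₐ[R] A)
    (hφ : ∀ n ≠ 0, ∀ m, φ (dpGamma R M n m) = 0) :
    ⨆ k : ℕ, ⨆ _ : k ≠ 0, GammaPow R M k ≤ LinearMap.ker φ.toLinearMap := by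
  refine iSup₂_le fun k hk => Submodule.span_le.mpr ?_
  rintro _ ⟨l, ms, ns, hsum, rfl⟩
  obtain ⟨i, hi⟩ : ∃ i, ns i ≠ 0 := by
    by_contra! h
    exact hk (by simp [← hsum, h])
  simp only [SetLike.mem_coe, LinearMap.mem_ker, AlgHom.toLinearMap_apply, map_prod]
  exact Finset.prod_eq_zero (Finset.mem_univ i) (hφ _ hi (ms i))

end DPA

/-- If `M₁ → M₀ → M → 0` is exact, then the induced map `Γ(M₀) → Γ(M)` (the
algebra map `G` with `G (γ_n m) = γ_n (g m)`) is surjective, with kernel the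
ideal generated by the image (under the induced map `F : Γ(M₁) → Γ(M₀)`) of the
augmentation ideal `Γ⁺(M₁) = ⊕_{n ≥ 1} Γⁿ(M₁)`. -/
theorem dpa_rightExact (M₁ M₀ : Type u) [AddCommGroup M₁] [Module R M₁]
    [AddCommGroup M₀] [Module R M₀]
    (f : M₁ →ₗ[R] M₀) (g : M₀ →ₗ[R] M)
    (hexact : Function.Exact f g) (hsurj : Function.Surjective g)
    (F : DPA R M₁ →ₐ[R] DPA R M₀)
    (hF : ∀ (n : ℕ) (m : M₁), F (dpGamma R M₁ n m) = dpGamma R M₀ n (f m))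
    (G : DPA R M₀ →ₐ[R] DPA R M)
    (hG : ∀ (n : ℕ) (m : M₀), G (dpGamma R M₀ n m) = dpGamma R M n (g m)) :
    Function.Surjective G ∧
      RingHom.ker G =
        Ideal.span (⇑F '' ↑(⨆ k : ℕ, ⨆ _ : k ≠ 0, GammaPow R M₁ k)) := by
  set I := Ideal.span (⇑F '' ↑(⨆ k : ℕ, ⨆ _ : k ≠ 0, GammaPow R M₁ k))
  have hI_le_ker : I ≤ RingHom.ker G := by
    refine Ideal.span_le.mpr ?_
    rintro _ ⟨z, hz, rfl⟩
    refine DPA.iSup_gammaPow_le_ker (G.comp F) (fun n hn m => ?_) hz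
    simp [hF, hG, hexact.apply_apply_eq_zero, (isDPFamily_dpGamma M).apply_zero hn]
  set γ : ℕ → M₀ → DPA R M₀ ⧸ I := fun n m => Ideal.Quotient.mk I (dpGamma R M₀ n m)
  have hγ : IsDPFamily R γ := (isDPFamily_dpGamma M₀).map (Ideal.Quotient.mkₐ R I)
  have hγ_fib : ∀ n a b, g a = g b → γ n a = γ n b := by
    intro n a b hab
    obtain ⟨m₁, hm₁⟩ := (hexact (b - a)).mp (by rw [map_sub, hab, sub_self])
    rw [show b = a + f m₁ by rw [hm₁]; abel]
    refine (hγ.apply_add_of_forall_eq_zero (fun k hk => ?_) n a).symm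
    refine Ideal.Quotient.eq_zero_iff_mem.mpr (Ideal.subset_span ⟨dpGamma R M₁ k m₁, ?_, hF k m₁⟩)
    exact (le_iSup₂ (f := fun k (_ : k ≠ 0) => GammaPow R M₁ k) k hk) (dpGamma_mem R M₁ k m₁)
  set φ := DPA.lift (hγ.comp_rightInverse g (Function.rightInverse_surjInv hsurj) hγ_fib)
  have hφG : φ.comp G = Ideal.Quotient.mkₐ R I := DPA.algHom_ext fun n m => by
    simpa [φ, hG] using hγ_fib n _ _ (Function.surjInv_eq hsurj (g m))
  refine ⟨DPA.surjective_of_dpGamma_mem_range G fun n m => ?_,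
    le_antisymm (fun x hx => ?_) hI_le_ker⟩
  · obtain ⟨m₀, rfl⟩ := hsurj m
    exact ⟨_, hG n m₀⟩
  · rw [← Ideal.Quotient.eq_zero_iff_mem, ← Ideal.Quotient.mkₐ_eq_mk R, ← hφG, AlgHom.comp_apply,
      RingHom.mem_ker.mp hx, map_zero]
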